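/- arXiv:2303.02827 — 9 statements merged into one kernel-verified Lean document; each statement's English description precedes it below -/
import Mathlib

section
/- For any real numbers a and b and any real g, the inequality (a^3 - g*a^2)*(a - b) ≥ (1/4)*(a^4 - b^4) - (g/3)*(a^3 - b^3) - (2*g^2/3)*(a - b)^2 holds. -/
theorem nonlinear_inequality (a b g : ℝ) :
    (a^3 - g*a^2)*(a - b) ≥ (1/4)*(a^4 - b^4) - (g/3)*(a^3 - b^3) - (2*g^2/3)*(a - b)^2 := by
  nlinarith [sq_nonneg ((a-b)*(3*a+b-2*g)), sq_nonneg ((a-b)*(a+b)), sq_nonneg ((a-b)*(a-g)), sq_nonneg ((a-b)*b), sq_nonneg (a-b), sq_nonneg ((a-b)*g)]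
end

section
/- Let b_0 = 11/6, b_1 = -7/6, b_2 = 1/3, and b_j = 0 for j ≥ 3. Then for every n ≥ 3 and every real sequence (w_k)_{k=3}^n, the double sum Σ_{k=3}^{n} w_k * Σ_{j=3}^{k} b_{k-j} w_j is nonnegative. -/
theorem bdf3_kernels_posdef (b : ℕ → ℝ)
    (hb0 : b 0 = 11/6) (hb1 : b 1 = -(7/6)) (hb2 : b 2 = 1/3)
    (hb : ∀ j, 3 ≤ j → b j = 0)
    (n : ℕ) (hn : 3 ≤ n) (w : ℕ → ℝ) :
    0 ≤ ∑ k ∈ Finset.Icc 3 n, w k * ∑ j ∈ Finset.Icc 3 k, b (k - j) * w j := by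
  -- v is w cut off below index 3
  set v : ℕ → ℝ := fun k => if 3 ≤ k then w k else 0 with hv
  -- evaluation of the inner convolution sum
  have inner_eval : ∀ m : ℕ, 3 ≤ m →
      ∑ j ∈ Finset.Icc 3 m, b (m - j) * w j
        = 11/6 * v m - 7/6 * v (m-1) + 1/3 * v (m-2) := by
    intro m hm
    have key : ∀ j ∈ Finset.Icc 3 m, b (m - j) * w j =
        (if j = m then 11/6 * w j else 0) +
        ((if j = m - 1 then -(7/6) * w j else 0) +
         (if j = m - 2 then 1/3 * w j else 0)) := by
      intro j hj
      simp only [Finset.mem_Icc] at hj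
      obtain ⟨hj3, hjm⟩ := hj
      rcases eq_or_lt_of_le hjm with h | h
      · subst h
        have h1 : ¬ (j = j - 1) := by omega
        have h2 : ¬ (j = j - 2) := by omega
        simp [h1, h2, hb0]
      · rcases Nat.lt_or_ge j (m-1) with h' | h'
        · rcases Nat.lt_or_ge j (m-2) with h'' | h''
          · have e0 : ¬ (j = m) := by omega
            have e1 : ¬ (j = m - 1) := by omega
            have e2 : ¬ (j = m - 2) := by omega
            have : b (m - j) = 0 := hb _ (by omega)
            simp [e0, e1, e2, this]
          · have ej : j = m - 2 := by omega
            have e0 : ¬ (j = m) := by omega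
            have e1 : ¬ (j = m - 1) := by omega
            have : m - j = 2 := by omega
            subst ej
            rw [if_neg e0, if_neg e1, if_pos rfl, this, hb2]
            ring
        · have ej : j = m - 1 := by omega
          have e0 : ¬ (j = m) := by omega
          have e2 : ¬ (j = m - 2) := by omega
          have : m - j = 1 := by omega
          subst ej
          rw [if_neg e0, if_neg e2, if_pos rfl, this, hb1]
          ring
    rw [Finset.sum_congr rfl key]
    rw [Finset.sum_add_distrib, Finset.sum_add_distrib,
        Finset.sum_ite_eq' _ m (fun j => 11/6 * w j),
        Finset.sum_ite_eq' _ (m-1) (fun j => -(7/6) * w j),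
        Finset.sum_ite_eq' _ (m-2) (fun j => 1/3 * w j)]
    have hm' : m ∈ Finset.Icc 3 m := by simp [Finset.mem_Icc]; omega
    have hvm : v m = w m := by simp [hv, hm]
    by_cases h4 : 4 ≤ m
    · have h1m : m - 1 ∈ Finset.Icc 3 m := by simp [Finset.mem_Icc]; omega
      have hv1 : v (m-1) = w (m-1) := by simp only [hv]; rw [if_pos (by omega)]
      by_cases h5 : 5 ≤ m
      · have h2m : m - 2 ∈ Finset.Icc 3 m := by simp [Finset.mem_Icc]; omega
        have hv2 : v (m-2) = w (m-2) := by simp only [hv]; rw [if_pos (by omega)]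
        rw [if_pos hm', if_pos h1m, if_pos h2m, hvm, hv1, hv2]; ring
      · have h2m : ¬ (m - 2 ∈ Finset.Icc 3 m) := by simp [Finset.mem_Icc]; omega
        have hv2 : v (m-2) = 0 := by simp only [hv]; rw [if_neg (by omega)]
        rw [if_pos hm', if_pos h1m, if_neg h2m, hvm, hv1, hv2]; ring
    · have h1m : ¬ (m - 1 ∈ Finset.Icc 3 m) := by simp [Finset.mem_Icc]; omega
      have h2m : ¬ (m - 2 ∈ Finset.Icc 3 m) := by simp [Finset.mem_Icc]; omega
      have hv1 : v (m-1) = 0 := by simp only [hv]; rw [if_neg (by omega)]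
      have hv2 : v (m-2) = 0 := by simp only [hv]; rw [if_neg (by omega)]
      rw [if_pos hm', if_neg h1m, if_neg h2m, hvm, hv1, hv2]; ring
  -- main induction: the quadratic form dominates a Lyapunov function of the last two values
  have main : ∀ m : ℕ, 3 ≤ m →
      1/4 * (v m)^2 - 1/6 * (v m) * (v (m-1)) + 1/24 * (v (m-1))^2 ≤
        ∑ k ∈ Finset.Icc 3 m, w k * ∑ j ∈ Finset.Icc 3 k, b (k - j) * w j := by
    intro m hm
    induction m, hm using Nat.le_induction with
    | base =>
      rw [Finset.Icc_self, Finset.sum_singleton, Finset.Icc_self,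
          Finset.sum_singleton]
      have hv3 : v 3 = w 3 := by simp [hv]
      have hv2 : v 2 = 0 := by simp [hv]
      simp only [Nat.sub_self, hb0, hv3, hv2]
      nlinarith [sq_nonneg (w 3)]
    | succ m hm ih =>
      rw [Finset.sum_Icc_succ_top (by omega : 3 ≤ m + 1)]
      have he : ∑ j ∈ Finset.Icc 3 (m+1), b (m + 1 - j) * w j
          = 11/6 * v (m+1) - 7/6 * v m + 1/3 * v (m-1) := by
        have := inner_eval (m+1) (by omega)
        have e1 : m + 1 - 1 = m := by omega
        have e2 : m + 1 - 2 = m - 1 := by omega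
        rwa [e1, e2] at this
      rw [he]
      have hwv : w (m+1) = v (m+1) := by simp only [hv]; rw [if_pos (by omega)]
      have e3 : m + 1 - 1 = m := by omega
      rw [hwv, e3]
      set x := v m
      set y := v (m-1)
      set z := v (m+1)
      nlinarith [ih, sq_nonneg (y + 4*z - 2*x), sq_nonneg (x - 4*z), sq_nonneg z]
  have hGpos : 0 ≤ 1/4 * (v n)^2 - 1/6 * (v n) * (v (n-1)) + 1/24 * (v (n-1))^2 := by
    nlinarith [sq_nonneg (v (n-1) - 2 * v n), sq_nonneg (v n)]
  linarith [main n hn]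
end

section
/- Let τ > 0 and define the DOC kernels by ϑ_0 = 6τ/11, ϑ_1 = 42τ/121, and the recursion 11*ϑ_m - 7*ϑ_{m-1} + 2*ϑ_{m-2} = 0 for m ≥ 2. Then for all m ≥ 0, ϑ_m = (6τ/11) * [ ((39 + 7√39 i)/78) * ((7 - √39 i)/22)^m + ((39 - 7√39 i)/78) * ((7 + √39 i)/22)^m ], where i is the imaginary unit. -/
/-!
Both `ϑ` and the closed form solve the second-order recurrence with characteristic polynomial
`11 λ² - 7 λ + 2`: the closed form because it is a linear combination of the geometric sequences
at the conjugate roots `(7 ∓ √39 i)/22`. Solutions of a linear recurrence are determined by their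
initial values, and the coefficients `(39 ± 7√39 i)/78` are exactly those matching `ϑ₀` and `ϑ₁`.
-/

open Polynomial

namespace LinearRecurrence

variable {R : Type*} [CommRing R] {E : LinearRecurrence R}

theorem isSolution_const_mul_geom_add_geom {q₁ q₂ : R} (h₁ : E.charPoly.IsRoot q₁)
    (h₂ : E.charPoly.IsRoot q₂) (a c₁ c₂ : R) :
    E.IsSolution fun n ↦ a * (c₁ * q₁ ^ n + c₂ * q₂ ^ n) := by
  have hgeom (q : R) (hq : E.charPoly.IsRoot q) : (fun n ↦ q ^ n) ∈ E.solSpace :=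
    (E.is_sol_iff_mem_solSpace _).1 ((E.geom_sol_iff_root_charPoly q).2 hq)
  exact (E.is_sol_iff_mem_solSpace _).2 <| E.solSpace.smul_mem a <|
    add_mem (E.solSpace.smul_mem c₁ (hgeom q₁ h₁)) (E.solSpace.smul_mem c₂ (hgeom q₂ h₂))

end LinearRecurrence

noncomputable def bdf3DocRecurrence : LinearRecurrence ℂ := ⟨2, ![-2 / 11, 7 / 11]⟩

theorem bdf3DocRecurrence_isSolution_iff (u : ℕ → ℂ) :
    bdf3DocRecurrence.IsSolution u ↔ ∀ n, 11 * u (n + 2) - 7 * u (n + 1) + 2 * u n = 0 := by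
  change (∀ n, u (n + 2) = ∑ i : Fin 2, ![-2 / 11, 7 / 11] i * u (n + i)) ↔ _
  simp only [Fin.sum_univ_two, Matrix.cons_val_zero, Matrix.cons_val_one, Fin.val_zero,
    Fin.val_one, add_zero]
  refine forall_congr' fun n ↦ ⟨fun h ↦ ?_, fun h ↦ ?_⟩
  · linear_combination 11 * h
  · linear_combination h / 11

theorem bdf3DocRecurrence_charPoly_isRoot_iff (q : ℂ) :
    bdf3DocRecurrence.charPoly.IsRoot q ↔ 11 * q ^ 2 - 7 * q + 2 = 0 := by
  change (monomial 2 (1 : ℂ) - ∑ i : Fin 2, monomial i (![-2 / 11, 7 / 11] i)).IsRoot q ↔ _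
  simp only [Fin.sum_univ_two, Matrix.cons_val_zero, Matrix.cons_val_one, Fin.val_zero,
    Fin.val_one, IsRoot.def, eval_sub, eval_add, eval_monomial, pow_zero, pow_one, one_mul, mul_one]
  constructor <;> intro h
  · linear_combination 11 * h
  · linear_combination h / 11

theorem bdf3DocRecurrence_charPoly_isRoot_of_sq_eq {a : ℂ} (ha : a ^ 2 = -39) :
    bdf3DocRecurrence.charPoly.IsRoot ((7 - a) / 22) ∧
      bdf3DocRecurrence.charPoly.IsRoot ((7 + a) / 22) := by
  simp only [bdf3DocRecurrence_charPoly_isRoot_iff]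
  constructor <;> linear_combination ha / 44

theorem doc_kernel_explicit_formula_general (τ : ℝ) (ϑ : ℕ → ℝ)
    (h0 : ϑ 0 = 6*τ/11) (h1 : ϑ 1 = 42*τ/121)
    (hrec : ∀ m, 2 ≤ m → 11*ϑ m - 7*ϑ (m-1) + 2*ϑ (m-2) = 0) :
    ∀ m : ℕ, (ϑ m : ℂ) = (6*τ/11 : ℂ) *
      ( ((39 + 7*Real.sqrt 39*Complex.I)/78) * (((7 : ℂ) - Real.sqrt 39*Complex.I)/22)^m
      + ((39 - 7*Real.sqrt 39*Complex.I)/78) * (((7 : ℂ) + Real.sqrt 39*Complex.I)/22)^m ) := by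
  set a : ℂ := Real.sqrt 39 * Complex.I with ha_def
  have ha : a ^ 2 = -39 := by
    rw [ha_def, mul_pow, ← Complex.ofReal_pow, Real.sq_sqrt (by norm_num), Complex.I_sq]
    norm_num
  simp only [mul_assoc (7 : ℂ), ← ha_def]
  have hϑ : bdf3DocRecurrence.IsSolution fun m ↦ (ϑ m : ℂ) :=
    (bdf3DocRecurrence_isSolution_iff _).2 fun n ↦ by exact_mod_cast hrec (n + 2) (by omega)
  obtain ⟨hroot₁, hroot₂⟩ := bdf3DocRecurrence_charPoly_isRoot_of_sq_eq ha
  have hclosed := LinearRecurrence.isSolution_const_mul_geom_add_geom hroot₁ hroot₂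
    (6 * τ / 11) ((39 + 7 * a) / 78) ((39 - 7 * a) / 78)
  refine congrFun ((bdf3DocRecurrence.eq_iff_eqOn_range_order _ _ hϑ hclosed).2 ?_)
  intro n hn
  obtain rfl | rfl : n = 0 ∨ n = 1 := by
    have : n < 2 := Finset.mem_range.1 hn
    omega
  all_goals dsimp only
  · rw [h0]; push_cast; ring
  · rw [h1]; push_cast; linear_combination (7 * τ / 1573 : ℂ) * ha

theorem doc_kernel_explicit_formula (τ : ℝ) (hτ : 0 < τ) (ϑ : ℕ → ℝ)
    (h0 : ϑ 0 = 6*τ/11) (h1 : ϑ 1 = 42*τ/121)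
    (hrec : ∀ m, 2 ≤ m → 11*ϑ m - 7*ϑ (m-1) + 2*ϑ (m-2) = 0) :
    ∀ m : ℕ, (ϑ m : ℂ) = (6*τ/11 : ℂ) *
      ( ((39 + 7*Real.sqrt 39*Complex.I)/78) * (((7 : ℂ) - Real.sqrt 39*Complex.I)/22)^m
      + ((39 - 7*Real.sqrt 39*Complex.I)/78) * (((7 : ℂ) + Real.sqrt 39*Complex.I)/22)^m ) :=
  doc_kernel_explicit_formula_general τ ϑ h0 h1 hrec
end

section
/- Let τ > 0 and define ϑ_0 = 6τ/11, ϑ_1 = 42τ/121, and 11*ϑ_m = 7*ϑ_{m-1} - 2*ϑ_{m-2} for m ≥ 2 (real sequence). Then for all m ≥ 0, |ϑ_m| ≤ τ * (2/11)^{m/2}. -/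
theorem doc_kernel_bound (τ : ℝ) (hτ : 0 < τ) (ϑ : ℕ → ℝ)
    (h0 : ϑ 0 = 6*τ/11) (h1 : ϑ 1 = 42*τ/121)
    (hrec : ∀ m, 2 ≤ m → 11*ϑ m = 7*ϑ (m-1) - 2*ϑ (m-2)) :
    ∀ m : ℕ, |ϑ m| ≤ τ * ((2:ℝ)/11) ^ ((m : ℝ)/2) := by
  set E : ℕ → ℝ := fun m => (ϑ (m+1) - 7/22 * ϑ m)^2 + 39/484 * (ϑ m)^2 with hE
  have hstep : ∀ m : ℕ, E (m+1) = (2/11) * E m := by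
    intro m
    have h := hrec (m+2) (by omega)
    simp only [show m+2-1 = m+1 from rfl, show m+2-2 = m from rfl] at h
    have h2 : ϑ (m+2) = (7 * ϑ (m+1) - 2 * ϑ m) / 11 := by linarith
    simp only [hE]
    rw [show m+1+1 = m+2 from rfl, h2]
    ring
  have hEm : ∀ m : ℕ, E m = ((2:ℝ)/11)^m * (792/14641 * τ^2) := by
    intro m
    induction m with
    | zero =>
      simp only [hE, pow_zero, one_mul, h0, h1]
      ring
    | succ n ih =>
      rw [hstep n, ih, pow_succ]
      ring
  intro m
  have hb : (ϑ m)^2 ≤ τ^2 * ((2:ℝ)/11)^m := by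
    have h1 : 39/484 * (ϑ m)^2 ≤ E m := by
      simp only [hE]
      nlinarith [sq_nonneg (ϑ (m+1) - 7/22 * ϑ m)]
    rw [hEm m] at h1
    nlinarith [pow_pos (show (0:ℝ) < 2/11 by norm_num) m, sq_nonneg τ]
  have habs : |ϑ m| ≤ Real.sqrt (τ^2 * ((2:ℝ)/11)^m) := by
    rw [← Real.sqrt_sq_eq_abs]
    exact Real.sqrt_le_sqrt hb
  have hrw : Real.sqrt (τ^2 * ((2:ℝ)/11)^m) = τ * ((2:ℝ)/11) ^ ((m : ℝ)/2) := by
    rw [Real.sqrt_mul (sq_nonneg τ), Real.sqrt_sq hτ.le]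
    congr 1
    rw [show ((m:ℝ)/2) = (m:ℝ) * (1/2) by ring,
      Real.rpow_mul (by norm_num), Real.rpow_natCast,
      Real.rpow_div_two_eq_sqrt _ (by positivity), Real.rpow_one]
  rw [← hrw]
  exact habs
end

section
/- Let τ > 0 and define the real sequence ϑ_0 = 6τ/11, ϑ_1 = 42τ/121, 11*ϑ_m = 7*ϑ_{m-1} - 2*ϑ_{m-2} for m ≥ 2. Then for every n, Σ_{m=0}^{n} |ϑ_m| ≤ (22/9)*τ. -/
theorem doc_kernel_sum_bound (τ : ℝ) (hτ : 0 < τ) (ϑ : ℕ → ℝ)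
    (h0 : ϑ 0 = 6*τ/11) (h1 : ϑ 1 = 42*τ/121)
    (hrec : ∀ m, 2 ≤ m → 11*ϑ m = 7*ϑ (m-1) - 2*ϑ (m-2)) :
    ∀ n : ℕ, ∑ m ∈ Finset.range (n+1), |ϑ m| ≤ (22/9)*τ := by
  -- Lyapunov function
  set q : ℕ → ℝ := fun n => 2*(ϑ n)^2 - 7*(ϑ n)*(ϑ (n+1)) + 11*(ϑ (n+1))^2 with hq
  have hrec' : ∀ n : ℕ, 11*ϑ (n+2) = 7*ϑ (n+1) - 2*ϑ n := by
    intro n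
    have := hrec (n+2) (by omega)
    simpa using this
  have hqnonneg : ∀ n, 0 ≤ q n := by
    intro n
    have h1 := sq_nonneg (4*ϑ n - 7*ϑ (n+1))
    have h2 := sq_nonneg (ϑ (n+1))
    simp only [hq]
    nlinarith
  have hqstep : ∀ n, q (n+1) = (2/11) * q n := by
    intro n
    have h := hrec' n
    have he : ϑ (n+2) = (7*ϑ (n+1) - 2*ϑ n)/11 := by linarith
    simp only [hq]
    rw [show n+1+1 = n+2 from rfl, he]
    ring
  -- bound |ϑ (n+1)| ≤ (5/11) √(q n)
  have habs : ∀ n, |ϑ (n+1)| ≤ (5/11) * Real.sqrt (q n) := by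
    intro n
    have hsq : (ϑ (n+1))^2 ≤ (25/121) * q n := by
      have := sq_nonneg (4*ϑ n - 7*ϑ (n+1))
      simp only [hq]
      nlinarith
    have h2 : (ϑ (n+1))^2 ≤ ((5/11) * Real.sqrt (q n))^2 := by
      have : ((5/11) * Real.sqrt (q n))^2 = (25/121) * q n := by
        rw [mul_pow, Real.sq_sqrt (hqnonneg n)]; ring
      rw [this]; exact hsq
    have h3 : |ϑ (n+1)| = Real.sqrt ((ϑ (n+1))^2) := (Real.sqrt_sq_eq_abs _).symm
    rw [h3]
    calc Real.sqrt ((ϑ (n+1))^2) ≤ Real.sqrt (((5/11) * Real.sqrt (q n))^2) :=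
          Real.sqrt_le_sqrt h2
      _ = |(5/11) * Real.sqrt (q n)| := Real.sqrt_sq_eq_abs _
      _ = (5/11) * Real.sqrt (q n) := abs_of_nonneg (by positivity)
  -- √(q (n+1)) ≤ (3/7) √(q n)
  have hsqrtstep : ∀ n, Real.sqrt (q (n+1)) ≤ (3/7) * Real.sqrt (q n) := by
    intro n
    have h2 : q (n+1) ≤ ((3/7) * Real.sqrt (q n))^2 := by
      have : ((3/7) * Real.sqrt (q n))^2 = (9/49) * q n := by
        rw [mul_pow, Real.sq_sqrt (hqnonneg n)]; ring
      rw [this, hqstep n]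
      nlinarith [hqnonneg n]
    calc Real.sqrt (q (n+1)) ≤ Real.sqrt (((3/7) * Real.sqrt (q n))^2) :=
          Real.sqrt_le_sqrt h2
      _ = |(3/7) * Real.sqrt (q n)| := Real.sqrt_sq_eq_abs _
      _ = (3/7) * Real.sqrt (q n) := abs_of_nonneg (by positivity)
  -- strengthened invariant
  have key : ∀ n : ℕ, (∑ m ∈ Finset.range (n+1), |ϑ m|) + Real.sqrt (q n) ≤ (22/9)*τ := by
    intro n
    induction n with
    | zero =>
      have hs : Real.sqrt (q 0) ≤ τ := by
        have : q 0 ≤ τ^2 := by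
          simp only [hq, h0, h1]
          nlinarith [sq_nonneg τ]
        calc Real.sqrt (q 0) ≤ Real.sqrt (τ^2) := Real.sqrt_le_sqrt this
          _ = |τ| := Real.sqrt_sq_eq_abs _
          _ = τ := abs_of_pos hτ
      have habs0 : |ϑ 0| = 6*τ/11 := by
        rw [h0]; exact abs_of_pos (by positivity)
      simp only [zero_add, Finset.sum_range_one, habs0]
      linarith
    | succ n ih =>
      rw [Finset.sum_range_succ]
      have h1' := habs n
      have h2' := hsqrtstep n
      have h3' : 0 ≤ Real.sqrt (q n) := Real.sqrt_nonneg _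
      linarith
  intro n
  have := key n
  have := Real.sqrt_nonneg (q n)
  linarith
end

section
/- Let b_0 = 11/6, b_1 = -7/6, b_2 = 1/3, b_j = 0 for j ≥ 3, and let ϑ be the DOC kernels satisfying Σ_{j=k}^{n} ϑ_{n-j} b_{j-k} = δ_{nk}. Then for every n ≥ 3 and every real sequence (w_k)_{k=3}^n, Σ_{k=3}^{n} w_k Σ_{j=3}^{k} ϑ_{k-j} w_j ≥ 0. -/
theorem doc_kernels_posdef (b ϑ : ℕ → ℝ)
    (hb0 : b 0 = 11/6) (hb1 : b 1 = -(7/6)) (hb2 : b 2 = 1/3)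
    (hb : ∀ j, 3 ≤ j → b j = 0)
    (horth : ∀ n k : ℕ, k ≤ n →
      ∑ j ∈ Finset.Icc k n, ϑ (n-j) * b (j-k) = if n = k then 1 else 0)
    (n : ℕ) (hn : 3 ≤ n) (w : ℕ → ℝ) :
    0 ≤ ∑ k ∈ Finset.Icc 3 n, w k * ∑ j ∈ Finset.Icc 3 k, ϑ (k - j) * w j := by
  classical
  set v : ℕ → ℝ := fun k => ∑ j ∈ Finset.Icc 3 k, ϑ (k - j) * w j with hv
  have hvlow : ∀ k, k < 3 → v k = 0 := by
    intro k hk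
    simp [hv, Finset.Icc_eq_empty_of_lt hk]
  -- Lemma A : reproduction property
  have hA : ∀ k, 3 ≤ k → ∑ j ∈ Finset.Icc 3 k, b (k - j) * v j = w k := by
    intro k hk
    have swap : ∑ j ∈ Finset.Icc 3 k, b (k - j) * v j
        = ∑ m ∈ Finset.Icc 3 k, w m * ∑ j ∈ Finset.Icc m k, b (k - j) * ϑ (j - m) := by
      calc ∑ j ∈ Finset.Icc 3 k, b (k - j) * v j
          = ∑ j ∈ Finset.Icc 3 k, ∑ m ∈ Finset.Icc 3 j, b (k - j) * (ϑ (j - m) * w m) := by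
            simp only [hv, Finset.mul_sum]
        _ = ∑ m ∈ Finset.Icc 3 k, ∑ j ∈ Finset.Icc m k, b (k - j) * (ϑ (j - m) * w m) := by
            refine Finset.sum_comm' ?_
            intro x y
            simp only [Finset.mem_Icc]
            omega
        _ = ∑ m ∈ Finset.Icc 3 k, w m * ∑ j ∈ Finset.Icc m k, b (k - j) * ϑ (j - m) := by
            refine Finset.sum_congr rfl fun m _ => ?_
            rw [Finset.mul_sum]
            refine Finset.sum_congr rfl fun j _ => ?_
            ring
    rw [swap]
    have inner : ∀ m ∈ Finset.Icc 3 k,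
        ∑ j ∈ Finset.Icc m k, b (k - j) * ϑ (j - m) = if k = m then 1 else 0 := by
      intro m hm
      rw [Finset.mem_Icc] at hm
      have : ∑ j ∈ Finset.Icc m k, b (k - j) * ϑ (j - m)
          = ∑ j ∈ Finset.Icc m k, ϑ (k - j) * b (j - m) := by
        refine Finset.sum_nbij' (fun j => k + m - j) (fun j => k + m - j) ?_ ?_ ?_ ?_ ?_
        · intro a ha; simp only [Finset.mem_Icc] at ha ⊢; omega
        · intro a ha; simp only [Finset.mem_Icc] at ha ⊢; omega
        · intro a ha; simp only [Finset.mem_Icc] at ha; omega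
        · intro a ha; simp only [Finset.mem_Icc] at ha; omega
        · intro a ha
          rw [Finset.mem_Icc] at ha
          have h1 : k - (k + m - a) = a - m := by omega
          have h2 : k + m - a - m = k - a := by omega
          rw [h1, h2]; ring
      rw [this, horth k m hm.2]
    rw [Finset.sum_congr rfl fun m hm => by rw [inner m hm]]
    rw [Finset.sum_eq_single k]
    · simp
    · intro m hm hne
      simp [Ne.symm hne]
    · intro h
      exact absurd (Finset.mem_Icc.mpr ⟨hk, le_refl k⟩) h
  -- Lemma B : inner b-sum is a 3-term recursion
  have hB : ∀ k, 3 ≤ k → ∑ j ∈ Finset.Icc 3 k, b (k - j) * v j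
      = 11/6 * v k - 7/6 * v (k-1) + 1/3 * v (k-2) := by
    intro k hk
    rcases eq_or_lt_of_le hk with h3 | h4
    · subst h3
      rw [show Finset.Icc 3 3 = {3} from rfl]
      simp [hb0, hvlow 2 (by norm_num), hvlow 1 (by norm_num)]
    rcases eq_or_lt_of_le (Nat.succ_le_of_lt h4) with h4' | h5
    · rw [← h4']
      rw [show Finset.Icc 3 4 = {3, 4} from rfl]
      rw [Finset.sum_insert (by decide), Finset.sum_singleton]
      norm_num [hb0, hb1, hvlow 2 (by norm_num)]
      ring
    · -- k ≥ 5
      have hk5 : 5 ≤ k := h5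
      have hsub : Finset.Icc (k-2) k ⊆ Finset.Icc 3 k := by
        intro x hx; rw [Finset.mem_Icc] at *; omega
      have hzero : ∀ x ∈ Finset.Icc 3 k, x ∉ Finset.Icc (k-2) k → b (k - x) * v x = 0 := by
        intro x hx hx'
        rw [Finset.mem_Icc] at hx hx'
        rw [hb (k - x) (by omega)]
        ring
      rw [← Finset.sum_subset hsub hzero]
      have : Finset.Icc (k-2) k = {k-2, k-1, k} := by
        ext x; simp only [Finset.mem_Icc, Finset.mem_insert, Finset.mem_singleton]; omega
      rw [this, Finset.sum_insert (by simp; omega), Finset.sum_insert (by simp; omega),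
        Finset.sum_singleton]
      have e1 : k - (k-2) = 2 := by omega
      have e2 : k - (k-1) = 1 := by omega
      have e3 : k - k = 0 := by omega
      rw [e1, e2, e3, hb0, hb1, hb2]
      ring
  -- Rewrite the target sum
  have key : ∑ k ∈ Finset.Icc 3 n, w k * v k
      = ∑ k ∈ Finset.Icc 3 n, v k * (11/6 * v k - 7/6 * v (k-1) + 1/3 * v (k-2)) := by
    refine Finset.sum_congr rfl fun k hk => ?_
    rw [Finset.mem_Icc] at hk
    rw [← hA k hk.1, hB k hk.1]
    ring
  show 0 ≤ ∑ k ∈ Finset.Icc 3 n, w k * v k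
  rw [key]
  -- Energy induction
  set E : ℝ → ℝ → ℝ := fun x y => 541/900 * x^2 - 7/15 * x * y + 1/9 * y^2 with hE
  have ind : ∀ m, 2 ≤ m → E (v m) (v (m-1))
      ≤ ∑ k ∈ Finset.Icc 3 m, v k * (11/6 * v k - 7/6 * v (k-1) + 1/3 * v (k-2)) := by
    intro m hm
    induction m, hm using Nat.le_induction with
    | base =>
      simp [Finset.Icc_eq_empty_of_lt (by norm_num : (2:ℕ) < 3), hE,
        hvlow 2 (by norm_num), hvlow 1 (by norm_num)]
    | succ m hm ih =>
      rw [Finset.sum_Icc_succ_top (by omega : 3 ≤ m + 1)]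
      have e1 : m + 1 - 1 = m := by omega
      have e2 : m + 1 - 2 = m - 1 := by omega
      rw [e1, e2]
      have step : E (v (m+1)) (v m) ≤ E (v m) (v (m-1))
          + v (m+1) * (11/6 * v (m+1) - 7/6 * v m + 1/3 * v (m-1)) := by
        simp only [hE]
        nlinarith [sq_nonneg (1/2 * v (m+1) - 7/10 * v m + 1/3 * v (m-1)),
          sq_nonneg (v (m+1))]
      linarith
  have hEpos : 0 ≤ E (v n) (v (n-1)) := by
    simp only [hE]
    nlinarith [sq_nonneg (541 * v n - 210 * v (n-1)), sq_nonneg (v (n-1))]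
  calc (0:ℝ) ≤ E (v n) (v (n-1)) := hEpos
    _ ≤ _ := ind n (by omega)
end

section
/- Let τ > 0, b_0 = 11/(6τ), b_1 = -7/(6τ), b_2 = 1/(3τ), b_j = 0 for j ≥ 3, and ϑ the DOC kernels with Σ_{j=k}^{n} ϑ_{n-j} b_{j-k} = δ_{nk} for n ≥ k ≥ 3. Then for any sequence (e^j)_{j≥1} in a real vector space, and n ≥ k ≥ 3, Σ_{l=3}^{k} ϑ_{k-l} Σ_{j=1}^{l} b_{l-j} (e^j - e^{j-1}) = (e^k - e^{k-1}) + Σ_{l=3}^{k} ϑ_{k-l} b_{l-1} (e^1 - e^0) + Σ_{l=3}^{k} ϑ_{k-l} b_{l-2} (e^2 - e^1). -/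
/-!
Split the inner convolution sum at the first index `3` at which the DOC kernels act. After
exchanging the order of summation, the part with `j ≥ 3` collapses to `∇e^k` by the discrete
orthogonality of `ϑ` and `b`; the terms `j = 1, 2` are the starting-value contributions.
-/

open Finset

section DOCKernels

variable {M V : Type*} [AddCommMonoid M] [AddCommGroup V] [Module ℝ V]

lemma sum_Icc_eq_sum_Ico_add_sum_Icc (f : ℕ → M) {a m l : ℕ} (ham : a ≤ m) (hml : m ≤ l + 1) :
    ∑ j ∈ Icc a l, f j = ∑ j ∈ Ico a m, f j + ∑ j ∈ Icc m l, f j := by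
  rw [← Ico_add_one_right_eq_Icc, ← Ico_add_one_right_eq_Icc, sum_Ico_consecutive f ham hml]

lemma sum_doc_smul_sum_conv_eq (b ϑ : ℕ → ℝ) {m k : ℕ} (hmk : m ≤ k)
    (horth : ∀ n k : ℕ, m ≤ k → k ≤ n →
      ∑ j ∈ Icc k n, ϑ (n - j) * b (j - k) = if n = k then 1 else 0)
    (v : ℕ → V) :
    ∑ l ∈ Icc m k, ϑ (k - l) • ∑ j ∈ Icc m l, b (l - j) • v j = v k := by
  calc ∑ l ∈ Icc m k, ϑ (k - l) • ∑ j ∈ Icc m l, b (l - j) • v j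
      = ∑ j ∈ Icc m k, (∑ l ∈ Icc j k, ϑ (k - l) * b (l - j)) • v j := by
        simp only [smul_sum, smul_smul, sum_smul]
        exact sum_comm' fun l j => by simp only [mem_Icc]; omega
    _ = ∑ j ∈ Icc m k, (if k = j then (1 : ℝ) else 0) • v j :=
        sum_congr rfl fun j hj => by rw [horth k j (mem_Icc.1 hj).1 (mem_Icc.1 hj).2]
    _ = v k := by simp [hmk]

lemma sum_doc_smul_sum_conv_eq_add_start (b ϑ : ℕ → ℝ) {m k : ℕ} (hm : 1 ≤ m) (hmk : m ≤ k)
    (horth : ∀ n k : ℕ, m ≤ k → k ≤ n →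
      ∑ j ∈ Icc k n, ϑ (n - j) * b (j - k) = if n = k then 1 else 0)
    (v : ℕ → V) :
    ∑ l ∈ Icc m k, ϑ (k - l) • ∑ j ∈ Icc 1 l, b (l - j) • v j
      = v k + ∑ l ∈ Icc m k, ϑ (k - l) • ∑ j ∈ Ico 1 m, b (l - j) • v j := by
  have hsplit : ∀ l ∈ Icc m k, ϑ (k - l) • ∑ j ∈ Icc 1 l, b (l - j) • v j
      = ϑ (k - l) • ∑ j ∈ Ico 1 m, b (l - j) • v j
        + ϑ (k - l) • ∑ j ∈ Icc m l, b (l - j) • v j := fun l hl => by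
    rw [sum_Icc_eq_sum_Ico_add_sum_Icc _ hm (by linarith [(mem_Icc.1 hl).1]), smul_add]
  rw [sum_congr rfl hsplit, sum_add_distrib, sum_doc_smul_sum_conv_eq b ϑ hmk horth, add_comm]

end DOCKernels

theorem doc_applied_to_bdf3_general (b ϑ : ℕ → ℝ)
    (horth : ∀ n k : ℕ, 3 ≤ k → k ≤ n →
      ∑ j ∈ Finset.Icc k n, ϑ (n-j) * b (j-k) = if n = k then 1 else 0)
    (V : Type*) [AddCommGroup V] [Module ℝ V] (e : ℕ → V)
    (n k : ℕ) (hk : 3 ≤ k) :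
    ∑ l ∈ Finset.Icc 3 k, ϑ (k-l) • (∑ j ∈ Finset.Icc 1 l, b (l-j) • (e j - e (j-1)))
      = (e k - e (k-1))
        + ∑ l ∈ Finset.Icc 3 k, (ϑ (k-l) * b (l-1)) • (e 1 - e 0)
        + ∑ l ∈ Finset.Icc 3 k, (ϑ (k-l) * b (l-2)) • (e 2 - e 1) := by
  have hstart : Ico 1 3 = {1, 2} := by decide
  rw [sum_doc_smul_sum_conv_eq_add_start b ϑ (by norm_num) hk horth, hstart]
  simp only [sum_pair (by norm_num : (1 : ℕ) ≠ 2), smul_add, smul_smul, sum_add_distrib,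
    add_assoc]

theorem doc_applied_to_bdf3 (τ : ℝ) (hτ : 0 < τ) (b ϑ : ℕ → ℝ)
    (hb0 : b 0 = 11/(6*τ)) (hb1 : b 1 = -(7/(6*τ))) (hb2 : b 2 = 1/(3*τ))
    (hb : ∀ j, 3 ≤ j → b j = 0)
    (horth : ∀ n k : ℕ, 3 ≤ k → k ≤ n →
      ∑ j ∈ Finset.Icc k n, ϑ (n-j) * b (j-k) = if n = k then 1 else 0)
    (V : Type*) [AddCommGroup V] [Module ℝ V] (e : ℕ → V)
    (n k : ℕ) (hk : 3 ≤ k) (hkn : k ≤ n) :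
    ∑ l ∈ Finset.Icc 3 k, ϑ (k-l) • (∑ j ∈ Finset.Icc 1 l, b (l-j) • (e j - e (j-1)))
      = (e k - e (k-1))
        + ∑ l ∈ Finset.Icc 3 k, (ϑ (k-l) * b (l-1)) • (e 1 - e 0)
        + ∑ l ∈ Finset.Icc 3 k, (ϑ (k-l) * b (l-2)) • (e 2 - e 1) :=
  doc_applied_to_bdf3_general b ϑ horth V e n k hk
end

section
/- For any real numbers w_3, w_4, ..., w_n (n ≥ 5) and kernels b_0 = 11/6, b_1 = -7/6, b_2 = 1/3, b_j = 0 for j ≥ 3, the partial sums satisfy: 6 Σ_{k=3}^{n} w_k Σ_{j=3}^{k} b_{k-j} w_j ≥ (9/2)*(w_n² + (2/9)*w_{n-1}²). -/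
lemma bdf3_inner_sum (b : ℕ → ℝ) (hb : ∀ j, 3 ≤ j → b j = 0)
    (w : ℕ → ℝ) (k : ℕ) (hk : 5 ≤ k) :
    ∑ j ∈ Finset.Icc 3 k, b (k - j) * w j
      = b 2 * w (k - 2) + b 1 * w (k - 1) + b 0 * w k := by
  have hsub : Finset.Icc (k - 2) k ⊆ Finset.Icc 3 k := by
    intro x hx; simp only [Finset.mem_Icc] at *; omega
  have h1 : ∑ j ∈ Finset.Icc 3 k, b (k - j) * w j
      = ∑ j ∈ Finset.Icc (k - 2) k, b (k - j) * w j := by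
    refine (Finset.sum_subset hsub ?_).symm
    intro x hx hx'
    simp only [Finset.mem_Icc] at hx hx'
    have : b (k - x) = 0 := hb _ (by omega)
    simp [this]
  have h2 : Finset.Icc (k - 2) k = {k - 2, k - 1, k} := by
    ext x; simp only [Finset.mem_Icc, Finset.mem_insert, Finset.mem_singleton]; omega
  rw [h1, h2]
  rw [Finset.sum_insert (by simp; omega), Finset.sum_insert (by simp; omega),
    Finset.sum_singleton]
  have e1 : k - (k - 2) = 2 := by omega
  have e2 : k - (k - 1) = 1 := by omega
  have e3 : k - k = 0 := by omega
  rw [e1, e2, e3]; ring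

theorem bdf3_quadratic_form_lower_bound (b : ℕ → ℝ)
    (hb0 : b 0 = 11/6) (hb1 : b 1 = -(7/6)) (hb2 : b 2 = 1/3)
    (hb : ∀ j, 3 ≤ j → b j = 0)
    (n : ℕ) (hn : 5 ≤ n) (w : ℕ → ℝ) :
    6 * ∑ k ∈ Finset.Icc 3 n, w k * ∑ j ∈ Finset.Icc 3 k, b (k - j) * w j
      ≥ (9/2)*((w n)^2 + (2/9)*(w (n-1))^2) := by
  induction n, hn using Nat.le_induction with
  | base =>
    have h3 : Finset.Icc 3 5 = ({3, 4, 5} : Finset ℕ) := by decide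
    have h4 : Finset.Icc 3 4 = ({3, 4} : Finset ℕ) := by decide
    have h5 : Finset.Icc 3 3 = ({3} : Finset ℕ) := by decide
    have s3 : ∑ j ∈ Finset.Icc 3 3, b (3 - j) * w j = b 0 * w 3 := by
      rw [h5, Finset.sum_singleton]
    have s4 : ∑ j ∈ Finset.Icc 3 4, b (4 - j) * w j = b 1 * w 3 + b 0 * w 4 := by
      rw [h4, Finset.sum_insert (by decide), Finset.sum_singleton]
    have s5 : ∑ j ∈ Finset.Icc 3 5, b (5 - j) * w j
        = b 2 * w 3 + b 1 * w 4 + b 0 * w 5 := by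
      rw [h3, Finset.sum_insert (by decide), Finset.sum_insert (by decide),
        Finset.sum_singleton]; ring
    rw [h3, Finset.sum_insert (by decide), Finset.sum_insert (by decide),
      Finset.sum_singleton, s3, s4, s5, hb0, hb1, hb2]
    nlinarith [sq_nonneg (w 3 - w 4), sq_nonneg (w 4 - w 5), sq_nonneg (w 3 + w 5),
      sq_nonneg (w 5 - w 4), sq_nonneg (w 3), sq_nonneg (w 4), sq_nonneg (w 5)]
  | succ n hn ih =>
    rw [Finset.sum_Icc_succ_top (by omega)]
    rw [bdf3_inner_sum b hb w (n + 1) (by omega)]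
    have e1 : n + 1 - 2 = n - 1 := by omega
    have e2 : n + 1 - 1 = n := by omega
    rw [e1, e2, hb0, hb1, hb2]
    have hwn1 : w (n - 1) ^ 2 ≥ 0 := sq_nonneg _
    nlinarith [sq_nonneg (w (n + 1) + w (n - 1)), sq_nonneg (w (n + 1) - w n),
      sq_nonneg (w (n + 1)), ih]
end

section
/- Let τ > 0 with τ < 3/(2*(g² + ε)) for positive parameters g, ε, and let H be a finite-dimensional real inner product space with a linear operator L : H → H satisfying ⟨Lζ, ζ⟩ ≥ 0 for all ζ. Suppose w, v ∈ H (viewed as real-valued grid functions with pointwise multiplication making H a commutative algebra with ⟨ab, c⟩ = ⟨a, bc⟩) satisfy b_0 w + L w + f(w) = G and b_0 v + L v + f(v) = G with b_0 ≥ 3/(2τ), where f(u) = u³ - g u² - ε u acts pointwise. Then w = v. -/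
theorem bdf3_step_uniqueness (ι : Type*) [Fintype ι]
    (τ g ε b0 : ℝ) (hτ : 0 < τ) (hg : 0 < g) (hε : 0 < ε)
    (hτ' : τ < 3/(2*(g^2 + ε))) (hb0 : b0 ≥ 3/(2*τ))
    (L : (ι → ℝ) →ₗ[ℝ] (ι → ℝ))
    (hL : ∀ ζ : ι → ℝ, 0 ≤ ∑ i, L ζ i * ζ i)
    (w v G : ι → ℝ)
    (hw : ∀ i, b0 * w i + L w i + ((w i)^3 - g*(w i)^2 - ε*(w i)) = G i)
    (hv : ∀ i, b0 * v i + L v i + ((v i)^3 - g*(v i)^2 - ε*(v i)) = G i) :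
    w = v := by
  set ζ : ι → ℝ := w - v with hζ
  have hLz : ∀ i, L ζ i = L w i - L v i := by
    intro i
    have : L ζ = L w - L v := by rw [hζ, map_sub]
    rw [this]; rfl
  have key : ∀ i, b0 * (ζ i)^2 + L ζ i * ζ i ≤ (g^2 + ε) * (ζ i)^2 := by
    intro i
    have h1 := hw i
    have h2 := hv i
    have hzi : ζ i = w i - v i := rfl
    rw [hzi, hLz i]
    have hd : b0*(w i - v i) + (L w i - L v i)
        + ((w i)^3 - (v i)^3 - g*((w i)^2 - (v i)^2) - ε*(w i - v i)) = 0 := by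
      linarith
    have hd' : (b0*(w i - v i) + (L w i - L v i)
        + ((w i)^3 - (v i)^3 - g*((w i)^2 - (v i)^2) - ε*(w i - v i))) * (w i - v i) = 0 := by
      rw [hd, zero_mul]
    nlinarith [hd', sq_nonneg ((w i + v i - 2*g/3)*(w i - v i)),
      sq_nonneg (g*(w i - v i)), sq_nonneg ((w i - v i)^2)]
  have hb0' : g^2 + ε < b0 := by
    have hgε : 0 < g^2 + ε := by positivity
    have h1 : τ * (2*(g^2+ε)) < 3 := by
      rw [lt_div_iff₀ (by positivity)] at hτ'; linarith
    have h2 : 3/(2*τ) > g^2 + ε := by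
      rw [gt_iff_lt, lt_div_iff₀ (by positivity)]; nlinarith
    linarith
  have hsum : ∑ i, (b0 * (ζ i)^2 + L ζ i * ζ i) ≤ ∑ i, (g^2+ε) * (ζ i)^2 :=
    Finset.sum_le_sum fun i _ => key i
  rw [Finset.sum_add_distrib, ← Finset.mul_sum, ← Finset.mul_sum] at hsum
  have hLζ := hL ζ
  have hS : ∑ i, (ζ i)^2 ≤ 0 := by nlinarith [Finset.sum_nonneg (fun i (_ : i ∈ Finset.univ) => sq_nonneg (ζ i))]
  have hz : ∀ i, ζ i = 0 := by
    intro i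
    have := Finset.sum_eq_zero_iff_of_nonneg (fun i (_ : i ∈ Finset.univ) => sq_nonneg (ζ i))
    have hS0 : ∑ i, (ζ i)^2 = 0 :=
      le_antisymm hS (Finset.sum_nonneg fun i _ => sq_nonneg (ζ i))
    have := (this.mp hS0) i (Finset.mem_univ i)
    exact pow_eq_zero_iff (n := 2) (by norm_num) |>.mp this
  funext i
  have := hz i
  have : w i - v i = 0 := this
  linarith
end
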